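/- Define w : ℝ³ → ℝ³ by w(x,y,z) = (x + y²e^z, −y, 1), and let Ω be the open unit ball in ℝ³ centered at the origin. Then w has no continuous Euclidean symmetry on Ω: for all a, b ∈ ℝ³, if the Lie derivative L_{ξ_E} w vanishes identically on Ω for ξ_E(x) = a + b × x, then a = 0 and b = 0. -/

import Mathlib

noncomputable section

abbrev R3 : Type := Fin 3 → ℝ

/-- Partial derivative of a scalar field in the `i`-th coordinate direction. -/
def pd (i : Fin 3) (f : R3 → ℝ) (x : R3) : ℝ := fderiv ℝ f x (Pi.single i 1)

/-- Curl of a vector field on ℝ³. -/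
def vcurl (v : R3 → R3) (x : R3) : R3 :=
  ![pd 1 (fun y => v y 2) x - pd 2 (fun y => v y 1) x,
    pd 2 (fun y => v y 0) x - pd 0 (fun y => v y 2) x,
    pd 0 (fun y => v y 1) x - pd 1 (fun y => v y 0) x]

/-- Divergence of a vector field on ℝ³. -/
def vdiv (v : R3 → R3) (x : R3) : ℝ :=
  pd 0 (fun y => v y 0) x + pd 1 (fun y => v y 1) x + pd 2 (fun y => v y 2) x

/-- Componentwise directional derivative `(ξ·∇)v`. -/
def dirDeriv (ξ v : R3 → R3) (x : R3) : R3 :=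
  fun j => ∑ i : Fin 3, ξ x i * pd i (fun y => v y j) x

/-- Lie derivative of a vector field: `L_ξ v = (ξ·∇)v − (v·∇)ξ`. -/
def lieD (ξ v : R3 → R3) : R3 → R3 :=
  fun x => dirDeriv ξ v x - dirDeriv v ξ x

/-- Gradient of a scalar field on ℝ³. -/
def grad3 (f : R3 → ℝ) (x : R3) : R3 := fun i => pd i f x

lemma pd_const (i : Fin 3) (c : ℝ) (x : R3) : pd i (fun _ => c) x = 0 := by
  simp [pd]

lemma pd_neg1 (i : Fin 3) (x : R3) : pd i (fun y : R3 => -(y 1)) x = -((Pi.single i (1:ℝ) : R3) 1) := by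
  have h1 := hasFDerivAt_apply (𝕜 := ℝ) (1 : Fin 3) (x : R3)
  rw [pd, (show HasFDerivAt (fun y : R3 => -(y 1)) _ x from h1.neg).fderiv]
  simp

lemma pd_w0 (i : Fin 3) (x : R3) :
    pd i (fun y : R3 => y 0 + (y 1)^2 * Real.exp (y 2)) x =
      ((Pi.single i (1:ℝ) : R3)) 0 + (2 * x 1 * Real.exp (x 2)) * ((Pi.single i (1:ℝ) : R3)) 1
        + ((x 1)^2 * Real.exp (x 2)) * ((Pi.single i (1:ℝ) : R3)) 2 := by
  have h0 := hasFDerivAt_apply (𝕜 := ℝ) (0 : Fin 3) (x : R3)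
  have h1 := hasFDerivAt_apply (𝕜 := ℝ) (1 : Fin 3) (x : R3)
  have h2 := hasFDerivAt_apply (𝕜 := ℝ) (2 : Fin 3) (x : R3)
  have hfun : (fun y : R3 => y 0 + (y 1)^2 * Real.exp (y 2))
      = fun y : R3 => y 1 * y 1 * Real.exp (y 2) + y 0 := by
    funext y; ring
  rw [pd, hfun, (show HasFDerivAt (fun y : R3 => y 1 * y 1 * Real.exp (y 2) + y 0) _ x from
    ((h1.mul h1).mul h2.exp).add h0).fderiv]
  simp
  ring

lemma pd_affine (c d e : ℝ) (k l i : Fin 3) (x : R3) :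
    pd i (fun y : R3 => c + (d * y k - e * y l)) x
      = d * (Pi.single i (1:ℝ) : R3) k - e * (Pi.single i (1:ℝ) : R3) l := by
  have hk := (hasFDerivAt_apply (𝕜 := ℝ) (k : Fin 3) (x : R3)).const_mul d
  have hl := (hasFDerivAt_apply (𝕜 := ℝ) (l : Fin 3) (x : R3)).const_mul e
  rw [pd, (show HasFDerivAt (fun y : R3 => c + (d * y k - e * y l)) _ x from
    (hk.sub hl).const_add c).fderiv]
  simp

lemma pd_xi (a b : R3) (i j : Fin 3) (x : R3) :
    pd i (fun y : R3 => (a + crossProduct b y) j) x = crossProduct b (Pi.single i 1) j := by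
  set L := LinearMap.toContinuousLinearMap
    ((LinearMap.proj j : (Fin 3 → ℝ) →ₗ[ℝ] ℝ).comp (crossProduct b)) with hL
  have h : HasFDerivAt (fun y : R3 => (a + crossProduct b y) j) L x := by
    have := L.hasFDerivAt (x := x)
    have h2 := (hasFDerivAt_const (a j) x).add this
    simp only [zero_add] at h2
    exact h2.congr_of_eventuallyEq (Filter.Eventually.of_forall fun y => by simp [hL])
  rw [pd, h.fderiv]
  simp [hL]

/-- the magnetofluidostatic field `w = (x + y²eᶻ, −y, 1)` has no
continuous Euclidean symmetry on the open unit ball centered at the origin. -/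
theorem explicit_mfs_ysq_expz_no_euclidean_symmetry :
    let w : R3 → R3 := fun p =>
      ![p 0 + (p 1) ^ 2 * Real.exp (p 2), -(p 1), 1]
    let Ω : Set R3 := {p | (p 0) ^ 2 + (p 1) ^ 2 + (p 2) ^ 2 < 1}
    ∀ a b : R3,
      (∀ x ∈ Ω, lieD (fun y => a + crossProduct b y) w x = 0) →
      a = 0 ∧ b = 0 := by
  intro w Ω a b h
  have h' : ∀ x : R3, (x 0)^2 + (x 1)^2 + (x 2)^2 < 1 →
      lieD (fun y => a + crossProduct b y)
        (fun p => ![p 0 + (p 1) ^ 2 * Real.exp (p 2), -(p 1), (1:ℝ)]) x = 0 := h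
  have key : ∀ x : R3, (x 0)^2 + (x 1)^2 + (x 2)^2 < 1 → ∀ j : Fin 3,
      lieD (fun y => a + crossProduct b y)
        (fun p => ![p 0 + (p 1) ^ 2 * Real.exp (p 2), -(p 1), (1:ℝ)]) x j = 0 :=
    fun x hx j => congrFun (h' x hx) j
  -- extract equations at three points
  have E00 := key 0 (by norm_num) 0
  have E01 := key 0 (by norm_num) 1
  have E02 := key 0 (by norm_num) 2
  have E10 := key ![1/2, 0, 0] (by show ((1:ℝ)/2)^2 + (0:ℝ)^2 + (0:ℝ)^2 < 1; norm_num) 0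
  have E11 := key ![1/2, 0, 0] (by show ((1:ℝ)/2)^2 + (0:ℝ)^2 + (0:ℝ)^2 < 1; norm_num) 1
  have E12 := key ![1/2, 0, 0] (by show ((1:ℝ)/2)^2 + (0:ℝ)^2 + (0:ℝ)^2 < 1; norm_num) 2
  have E20 := key ![0, 1/2, 0] (by show (0:ℝ)^2 + ((1:ℝ)/2)^2 + (0:ℝ)^2 < 1; norm_num) 0
  have E21 := key ![0, 1/2, 0] (by show (0:ℝ)^2 + ((1:ℝ)/2)^2 + (0:ℝ)^2 < 1; norm_num) 1
  have E22 := key ![0, 1/2, 0] (by show (0:ℝ)^2 + ((1:ℝ)/2)^2 + (0:ℝ)^2 < 1; norm_num) 2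
  simp only [lieD, dirDeriv, Pi.sub_apply, Pi.zero_apply, Fin.sum_univ_three,
    Matrix.cons_val_zero, Matrix.cons_val_one, Matrix.head_cons, Matrix.cons_val_two,
    Matrix.tail_cons, Pi.add_apply, cross_apply,
    pd_w0, pd_neg1, pd_const, pd_affine,
    Pi.single_apply, Real.exp_zero] at E00 E01 E02 E10 E11 E12 E20 E21 E22 ⊢
  norm_num [Fin.ext_iff] at E00 E01 E02 E10 E11 E12 E20 E21 E22
  constructor <;> funext i <;> fin_cases i <;> simp <;> linarith
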